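/- arXiv:2104.04561 — 2 statements merged into one kernel-verified Lean document; each statement's English description precedes it below -/
import Mathlib

section
/- Let H be a Hilbert space and A : D(A) ⊆ H → H a densely defined m-dissipative operator with resolvent R(1,A) = (Id - A)⁻¹. Let B : D(A) → H be linear with ‖B R(1,A) f‖ ≤ c ‖f‖ for all f ∈ H and some c < 1. Then (Id - (A + B))(D(A)) = H, i.e. for every g ∈ H there is h ∈ D(A) with h - Ah - Bh = g. -/
open RealInnerProductSpace

/-- Neumann series perturbation of an m-dissipative operator: if `A` is densely defined,
dissipative, with resolvent `R` at `1` (so `(Id - A)(R g) = g` for all `g`), and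
`B : D(A) → H` satisfies `‖B (R f)‖ ≤ c ‖f‖` for some `c < 1`, then `Id - (A + B)`
is surjective from `D(A)` onto `H`. -/
theorem perturbed_range_surjective
    {H : Type*} [NormedAddCommGroup H] [InnerProductSpace ℝ H] [CompleteSpace H]
    (D : Submodule ℝ H) (A : D →ₗ[ℝ] H)
    (hdense : Dense (D : Set H))
    (hdiss : ∀ f : D, ⟪A f, (f : H)⟫ ≤ 0)
    (R : H → D) (hR : ∀ g : H, ((R g : H)) - A (R g) = g)
    (B : D →ₗ[ℝ] H) (c : ℝ) (hc : c < 1)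
    (hB : ∀ f : H, ‖B (R f)‖ ≤ c * ‖f‖) :
    ∀ g : H, ∃ h : D, (h : H) - A h - B h = g := by
  -- dissipativity gives ‖u‖ ≤ ‖u - A u‖
  have hnorm : ∀ u : D, ‖(u : H)‖ ≤ ‖(u : H) - A u‖ := by
    intro u
    have h1 : ‖(u : H)‖ ^ 2 ≤ ⟪(u : H) - A u, (u : H)⟫ := by
      rw [inner_sub_left, real_inner_self_eq_norm_sq]
      linarith [hdiss u]
    have h2 : ⟪(u : H) - A u, (u : H)⟫ ≤ ‖(u : H) - A u‖ * ‖(u : H)‖ :=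
      real_inner_le_norm _ _
    rcases eq_or_lt_of_le (norm_nonneg (u : H)) with h0 | h0
    · rw [← h0]; exact norm_nonneg _
    · nlinarith
  -- injectivity of Id - A
  have hinj : ∀ u v : D, (u : H) - A u = (v : H) - A v → u = v := by
    intro u v huv
    have : ((u - v : D) : H) - A (u - v) = 0 := by
      push_cast [map_sub]
      linear_combination (norm := module) huv
    have h0 := hnorm (u - v)
    rw [this, norm_zero] at h0
    have : ‖((u - v : D) : H)‖ = 0 := le_antisymm h0 (norm_nonneg _)
    have : ((u - v : D) : H) = 0 := norm_eq_zero.mp this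
    have : (u - v : D) = 0 := by exact_mod_cast this
    exact sub_eq_zero.mp this
  -- R is subtractive
  have hRsub : ∀ f f' : H, R f - R f' = R (f - f') := by
    intro f f'
    apply hinj
    push_cast [map_sub]
    have h1 := hR f
    have h2 := hR f'
    have h3 := hR (f - f')
    linear_combination (norm := module) h1 - h2 - h3
  intro g
  -- contraction
  set K : NNReal := ⟨max c 0, le_max_right _ _⟩ with hK
  set T : H → H := fun f => g + B (R f) with hT
  have hLip : LipschitzWith K T := by
    apply LipschitzWith.of_dist_le_mul
    intro f f'
    simp only [hT, dist_eq_norm, add_sub_add_left_eq_sub]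
    rw [← map_sub, hRsub]
    calc ‖B (R (f - f'))‖ ≤ c * ‖f - f'‖ := hB _
      _ ≤ max c 0 * ‖f - f'‖ := by
          apply mul_le_mul_of_nonneg_right (le_max_left _ _) (norm_nonneg _)
  have hCon : ContractingWith K T := by
    constructor
    · exact_mod_cast max_lt hc one_pos
    · exact hLip
  have : Nonempty H := ⟨0⟩
  set f := hCon.fixedPoint T with hfdef
  have hf : T f = f := hCon.fixedPoint_isFixedPt
  refine ⟨R f, ?_⟩
  rw [hR]
  have hf' : g + B (R f) = f := hf
  nth_rewrite 1 [← hf']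
  abel
end

section
/- Let H be a Hilbert space, (A, D) a dissipative densely defined operator on H, and suppose there exist operators A_k = M_k A and B_k = M_k B for a complete family of commuting orthogonal projections, such that on each invariant subspace the perturbation satisfies ‖Bφ‖² ≤ a‖Aφ‖·‖φ‖ + b‖φ‖² for constants a,b ≥ 0 and all φ in the domain. If A is essentially m-dissipative and B is dissipative with relative A-bound ≤ 1 in this sense, then A + B is essentially m-dissipative on D. Specialize: if A is essentially m-dissipative and dissipative B satisfies ‖Bφ‖ ≤ ε‖Aφ‖ + C‖φ‖ with ε < 1, then A + B on D is essentially m-dissipative. -/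
open RealInnerProductSpace

lemma aux_dense_perturb {E F : Type*} [AddCommGroup E] [Module ℝ E]
    [NormedAddCommGroup F] [Module ℝ F]
    (T P : E →ₗ[ℝ] F) (q : ℝ) (hq0 : 0 ≤ q) (hq1 : q < 1)
    (hrel : ∀ φ, ‖P φ‖ ≤ q * ‖T φ‖)
    (hT : Dense (Set.range fun φ => T φ)) :
    Dense (Set.range fun φ => T φ + P φ) := by
  have hq1' : (0:ℝ) < 1 - q := by linarith
  have hT' : ∀ g : F, ∀ δ : ℝ, 0 < δ → ∃ φ : E, ‖T φ - g‖ < δ := by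
    intro g δ hδ
    obtain ⟨φ, hφ⟩ := (Metric.denseRange_iff.mp hT) g δ hδ
    exact ⟨φ, by rwa [dist_comm, dist_eq_norm] at hφ⟩
  rw [show Dense (Set.range fun φ => T φ + P φ) = DenseRange (fun φ => T φ + P φ) from rfl,
    Metric.denseRange_iff]
  intro f ρ hρ
  set δ : ℝ := ρ * (1 - q) / 4 with hδdef
  have hδ : 0 < δ := by positivity
  choose Φ hΦ using fun g : F => hT' g δ hδ
  obtain ⟨s, hs0, hsS⟩ : ∃ s : ℕ → E, s 0 = Φ f ∧ ∀ n, s (n+1) = Φ (f - P (s n)) :=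
    ⟨fun n => Nat.rec (Φ f) (fun _ p => Φ (f - P p)) n, rfl, fun _ => rfl⟩
  have hb : ∀ n, ‖T (s (n+1)) - (f - P (s n))‖ < δ := fun n => by rw [hsS]; exact hΦ _
  have hb0 : ‖T (s 0) - f‖ < δ := by rw [hs0]; exact hΦ f
  set a : ℕ → ℝ := fun n => ‖P (s (n+1)) - P (s n)‖ with ha
  have ha0 : ∀ n, 0 ≤ a n := fun n => norm_nonneg _
  have hrel' : ∀ x y : E, ‖P x - P y‖ ≤ q * ‖T x - T y‖ := by
    intro x y; rw [← map_sub, ← map_sub]; exact hrel _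
  have hstep : ∀ n, a (n+1) ≤ q * a n + 2*q*δ := by
    intro n
    have h1 := hb (n+1)
    have h2 := hb n
    have key : T (s (n+2)) - T (s (n+1)) =
        (T (s (n+2)) - (f - P (s (n+1)))) - (T (s (n+1)) - (f - P (s n)))
          + (P (s n) - P (s (n+1))) := by abel
    have : ‖T (s (n+2)) - T (s (n+1))‖ ≤ δ + δ + a n := by
      rw [key]
      refine le_trans (norm_add_le _ _) ?_
      refine add_le_add (le_trans (norm_sub_le _ _) ?_) (le_of_eq (norm_sub_rev _ _))
      exact add_le_add h1.le h2.le
    calc a (n+1) ≤ q * ‖T (s (n+2)) - T (s (n+1))‖ := hrel' _ _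
      _ ≤ q * (δ + δ + a n) := by
          exact mul_le_mul_of_nonneg_left this hq0
      _ = q * a n + 2*q*δ := by ring
  have hgeo : ∀ n, a n ≤ q^n * a 0 + 2*q*δ/(1-q) := by
    intro n
    induction n with
    | zero =>
        simp only [pow_zero, one_mul]
        have : 0 ≤ 2*q*δ/(1-q) := by positivity
        linarith
    | succ n ih =>
        have h1 := hstep n
        have h2 : q * a n ≤ q * (q^n * a 0 + 2*q*δ/(1-q)) :=
          mul_le_mul_of_nonneg_left ih hq0
        have h3 : q * (q^n * a 0 + 2*q*δ/(1-q)) + 2*q*δ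
            = q^(n+1) * a 0 + 2*q*δ/(1-q) := by
          field_simp
          ring
        linarith
  obtain ⟨m, hm⟩ : ∃ m, q ^ m < ρ/4 / (a 0 + 1) := by
    refine exists_pow_lt_of_lt_one ?_ hq1
    have := ha0 0
    positivity
  have hma : q ^ m * a 0 < ρ/4 := by
    have h1 : q ^ m * a 0 ≤ q ^ m * (a 0 + 1) := by
      have := pow_nonneg hq0 m
      nlinarith [ha0 0]
    have h2 : q ^ m * (a 0 + 1) < ρ/4 / (a 0 + 1) * (a 0 + 1) := by
      have : (0:ℝ) < a 0 + 1 := by linarith [ha0 0]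
      exact mul_lt_mul_of_pos_right hm this
    have h3 : ρ/4 / (a 0 + 1) * (a 0 + 1) = ρ/4 := by
      exact div_mul_cancel₀ _ (by linarith [ha0 0])
    linarith
  refine ⟨s (m+1), ?_⟩
  have key : (T (s (m+1)) + P (s (m+1))) - f =
      (T (s (m+1)) - (f - P (s m))) + (P (s (m+1)) - P (s m)) := by abel
  have hfin : ‖(T (s (m+1)) + P (s (m+1))) - f‖ ≤ δ + a m := by
    rw [key]
    exact le_trans (norm_add_le _ _) (add_le_add (hb m).le le_rfl)
  have h2 : 2*q*δ/(1-q) = ρ * q / 2 := by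
    rw [hδdef]; field_simp; ring
  have : ‖(T (s (m+1)) + P (s (m+1))) - f‖ < ρ := by
    have := hgeo m
    have hq2 : ρ * q / 2 ≤ ρ / 2 := by nlinarith
    have hδ2 : δ ≤ ρ / 4 := by rw [hδdef]; nlinarith
    nlinarith [hma]
  rw [dist_eq_norm, norm_sub_rev]
  exact this



/-- Perturbation theorem for dissipative operators: if `(A, D)` is densely defined,
dissipative and essentially m-dissipative (i.e. `Range(Id - A)` is dense), and `B` is a
dissipative operator on `D` with relative `A`-bound less than one, i.e.
`‖Bφ‖ ≤ ε‖Aφ‖ + C‖φ‖` with `ε < 1`, then `A + B` is essentially m-dissipative on `D`: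
it is dissipative and `Range(Id - (A + B))` is dense. -/
theorem dissipative_perturbation_relative_bound
    {H : Type*} [NormedAddCommGroup H] [InnerProductSpace ℝ H] [CompleteSpace H]
    (D : Submodule ℝ H) (A B : D →ₗ[ℝ] H)
    (hdense : Dense (D : Set H))
    (hAdiss : ∀ φ : D, ⟪A φ, (φ : H)⟫ ≤ 0)
    (hAess : Dense (Set.range fun φ : D => (φ : H) - A φ))
    (hBdiss : ∀ φ : D, ⟪B φ, (φ : H)⟫ ≤ 0)
    (ε C : ℝ) (hε : ε < 1) (hC : 0 ≤ C)
    (hrel : ∀ φ : D, ‖B φ‖ ≤ ε * ‖A φ‖ + C * ‖φ‖) :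
    (∀ φ : D, ⟪A φ + B φ, (φ : H)⟫ ≤ 0)
    ∧ Dense (Set.range fun φ : D => (φ : H) - (A φ + B φ)) := by
  constructor
  · intro φ
    rw [inner_add_left]
    exact add_nonpos (hAdiss φ) (hBdiss φ)
  set ε' : ℝ := max ε 0 with hε'def
  have hε'0 : 0 ≤ ε' := le_max_right _ _
  have hε'1 : ε' < 1 := max_lt hε one_pos
  have h1ε' : (0:ℝ) < 1 - ε' := by linarith
  set K : ℝ := ε' * (2 + C) / (1 - ε') + C with hKdef
  have hK0 : 0 ≤ K := by positivity
  set n : ℕ := ⌊K⌋₊ + 1 with hndef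
  have hKn : K < (n:ℝ) := by
    rw [hndef]; push_cast; exact Nat.lt_floor_add_one K
  have hn0 : (0:ℝ) < n := lt_of_le_of_lt hK0 hKn
  set Tm : ℝ → (D →ₗ[ℝ] H) := fun t => D.subtype - A - t • B with hTmdef
  have hTm : ∀ t (φ : D), Tm t φ = (φ : H) - A φ - t • B φ := fun t φ => rfl
  -- key norm estimates
  have hφψ : ∀ t : ℝ, 0 ≤ t → ∀ φ : D, ‖(φ : H)‖ ≤ ‖Tm t φ‖ := by
    intro t ht0 φ
    have hin : ‖(φ:H)‖^2 ≤ ⟪Tm t φ, (φ:H)⟫ := by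
      rw [hTm, inner_sub_left, inner_sub_left, real_inner_smul_left,
        real_inner_self_eq_norm_sq]
      have h1 := hAdiss φ
      have h2 := hBdiss φ
      nlinarith
    have hle : ‖(φ:H)‖^2 ≤ ‖Tm t φ‖ * ‖(φ:H)‖ :=
      le_trans hin (real_inner_le_norm _ _)
    rcases eq_or_lt_of_le (norm_nonneg (φ:H)) with h | h
    · rw [← h]; exact norm_nonneg _
    · nlinarith
  have hkey : ∀ t : ℝ, 0 ≤ t → t ≤ 1 → ∀ φ : D, ‖B φ‖ ≤ K * ‖Tm t φ‖ := by
    intro t ht0 ht1 φ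
    have hψφ := hφψ t ht0 φ
    have hBε' : ‖B φ‖ ≤ ε' * ‖A φ‖ + C * ‖(φ:H)‖ := by
      have := hrel φ
      have hAn : 0 ≤ ‖A φ‖ := norm_nonneg _
      have hcoe : ‖φ‖ = ‖(φ:H)‖ := rfl
      rw [hcoe] at this
      have : ε * ‖A φ‖ ≤ ε' * ‖A φ‖ :=
        mul_le_mul_of_nonneg_right (le_max_left _ _) hAn
      linarith [hrel φ]
    have hAexp : (A φ : H) = (φ : H) - Tm t φ - t • B φ := by
      rw [hTm]; abel
    have hAbound : ‖A φ‖ ≤ ‖(φ:H)‖ + ‖Tm t φ‖ + t * ‖B φ‖ := by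
      rw [hAexp]
      refine le_trans (norm_sub_le _ _) ?_
      have h1 : ‖(φ:H) - Tm t φ‖ ≤ ‖(φ:H)‖ + ‖Tm t φ‖ := norm_sub_le _ _
      have h2 : ‖t • B φ‖ = t * ‖B φ‖ := by
        rw [norm_smul, Real.norm_of_nonneg ht0]
      linarith
    have htB : t * ‖B φ‖ ≤ ‖B φ‖ := by
      nlinarith [norm_nonneg (B φ)]
    have hA2 : (1 - ε') * ‖A φ‖ ≤ (2 + C) * ‖Tm t φ‖ := by nlinarith
    have hA3 : ‖A φ‖ ≤ (2 + C) / (1 - ε') * ‖Tm t φ‖ := by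
      rw [div_mul_eq_mul_div, le_div_iff₀ h1ε']
      nlinarith
    calc ‖B φ‖ ≤ ε' * ‖A φ‖ + C * ‖(φ:H)‖ := hBε'
      _ ≤ ε' * ((2 + C) / (1 - ε') * ‖Tm t φ‖) + C * ‖Tm t φ‖ := by
          refine add_le_add (mul_le_mul_of_nonneg_left hA3 hε'0)
            (mul_le_mul_of_nonneg_left hψφ hC)
      _ = K * ‖Tm t φ‖ := by rw [hKdef]; ring
  -- induction up the parameter
  have hind : ∀ j : ℕ, j ≤ n → Dense (Set.range fun φ : D => Tm ((j:ℝ)/n) φ) := by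
    intro j
    induction j with
    | zero =>
        intro _
        have heq0 : (fun φ : D => Tm (((0:ℕ):ℝ)/(n:ℝ)) φ) = fun φ : D => (φ:H) - A φ := by
          funext φ
          rw [hTm]
          norm_num
        rw [heq0]
        exact hAess
    | succ j ih =>
        intro hjn
        have hj : j ≤ n := Nat.le_of_succ_le hjn
        have ht0 : (0:ℝ) ≤ (j:ℝ)/n := by positivity
        have ht1 : (j:ℝ)/n ≤ 1 := by
          rw [div_le_one hn0]
          exact_mod_cast hj
        have hdense_j := ih hj
        have hq0 : (0:ℝ) ≤ K / n := by positivity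
        have hq1 : K / n < 1 := by rw [div_lt_one hn0]; exact hKn
        have hrelP : ∀ φ : D, ‖(-(((n:ℝ)⁻¹) • B)) φ‖ ≤ K / n * ‖Tm ((j:ℝ)/n) φ‖ := by
          intro φ
          rw [LinearMap.neg_apply, norm_neg, LinearMap.smul_apply, norm_smul,
            Real.norm_of_nonneg (by positivity : (0:ℝ) ≤ (n:ℝ)⁻¹)]
          have hk := hkey ((j:ℝ)/n) ht0 ht1 φ
          calc (n:ℝ)⁻¹ * ‖B φ‖ ≤ (n:ℝ)⁻¹ * (K * ‖Tm ((j:ℝ)/n) φ‖) :=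
                mul_le_mul_of_nonneg_left hk (by positivity)
            _ = K / n * ‖Tm ((j:ℝ)/n) φ‖ := by
                rw [div_mul_eq_mul_div, div_eq_inv_mul]; ring
        have := aux_dense_perturb (Tm ((j:ℝ)/n)) (-(((n:ℝ)⁻¹) • B)) (K/n) hq0 hq1 hrelP hdense_j
        have heq : (fun φ : D => Tm ((j:ℝ)/n) φ + (-(((n:ℝ)⁻¹) • B)) φ)
            = fun φ : D => Tm (((j+1:ℕ):ℝ)/n) φ := by
          funext φ
          rw [LinearMap.neg_apply, LinearMap.smul_apply, hTm, hTm]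
          push_cast
          rw [add_div, add_smul, one_div]
          abel
        rwa [heq] at this
  have := hind n le_rfl
  have heq : (fun φ : D => Tm ((n:ℝ)/n) φ) = fun φ : D => (φ:H) - (A φ + B φ) := by
    funext φ
    rw [hTm, div_self (ne_of_gt hn0), one_smul]
    abel
  rwa [heq] at this
end
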